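/- arXiv:2212.02531 — 4 statements merged into one kernel-verified Lean document; each statement's English description precedes it below -/
import Mathlib

section
/- For the Haar measure on the unitary group U(d), the first moment integral satisfies ∫ U† O U dμ_H(U) = (Tr(O)/d)·I for any d×d complex matrix O. -/
open MeasureTheory Matrix

noncomputable instance matrixMeasurableSpace {m n α : Type*} [MeasurableSpace α] :
    MeasurableSpace (Matrix m n α) :=
  inferInstanceAs (MeasurableSpace (m → n → α))

private lemma meas_entry {d : ℕ} (i j : Fin d) :
    Measurable (fun U : Matrix.unitaryGroup (Fin d) ℂ => (U : Matrix (Fin d) (Fin d) ℂ) i j) := by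
  have h1 : Measurable (fun M : Matrix (Fin d) (Fin d) ℂ => M i j) :=
    (measurable_pi_apply j).comp (measurable_pi_apply i)
  exact h1.comp measurable_subtype_coe

private lemma meas_mul_left {d : ℕ} (V : Matrix.unitaryGroup (Fin d) ℂ) :
    Measurable (fun U : Matrix.unitaryGroup (Fin d) ℂ => V * U) := by
  have h : Measurable (fun U : Matrix.unitaryGroup (Fin d) ℂ =>
      ((V : Matrix (Fin d) (Fin d) ℂ) * (U : Matrix (Fin d) (Fin d) ℂ))) := by
    apply measurable_pi_lambda
    intro i
    apply measurable_pi_lambda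
    intro j
    have he : (fun U : Matrix.unitaryGroup (Fin d) ℂ =>
        ((V : Matrix (Fin d) (Fin d) ℂ) * (U : Matrix (Fin d) (Fin d) ℂ)) i j)
        = fun U : Matrix.unitaryGroup (Fin d) ℂ => ∑ k, (V : Matrix (Fin d) (Fin d) ℂ) i k *
            (U : Matrix (Fin d) (Fin d) ℂ) k j := by
      funext U; simp [Matrix.mul_apply]
    rw [he]
    exact Finset.measurable_sum _ fun k _ => (meas_entry k j).const_mul _
  exact Measurable.subtype_mk h

private lemma haar_key {d : ℕ} {μ : Measure (Matrix.unitaryGroup (Fin d) ℂ)}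
    (hinv : ∀ V : Matrix.unitaryGroup (Fin d) ℂ, μ.map (fun U => V * U) = μ)
    (V : Matrix.unitaryGroup (Fin d) ℂ) (f : Matrix.unitaryGroup (Fin d) ℂ → ℂ)
    (hf : Measurable f) :
    ∫ U, f (V * U) ∂μ = ∫ U, f U ∂μ := by
  conv_rhs => rw [← hinv V]
  rw [integral_map (meas_mul_left V).aemeasurable]
  rw [hinv V]
  exact hf.aestronglyMeasurable

private lemma meas_mij {d : ℕ} (i j a b : Fin d) :
    Measurable (fun U : Matrix.unitaryGroup (Fin d) ℂ =>
      star ((U : Matrix (Fin d) (Fin d) ℂ) i a) * (U : Matrix (Fin d) (Fin d) ℂ) j b) :=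
  (continuous_star.measurable.comp (meas_entry i a)).mul (meas_entry j b)

private lemma int_mij {d : ℕ} {μ : Measure (Matrix.unitaryGroup (Fin d) ℂ)}
    [IsProbabilityMeasure μ] (i j a b : Fin d) :
    Integrable (fun U : Matrix.unitaryGroup (Fin d) ℂ =>
      star ((U : Matrix (Fin d) (Fin d) ℂ) i a) * (U : Matrix (Fin d) (Fin d) ℂ) j b) μ := by
  apply Integrable.mono' (integrable_const (1 : ℝ)) (meas_mij i j a b).aestronglyMeasurable
  filter_upwards with U
  rw [norm_mul, norm_star]
  have h1 := entry_norm_bound_of_unitary U.2 i a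
  have h2 := entry_norm_bound_of_unitary U.2 j b
  exact mul_le_one₀ h1 (norm_nonneg _) h2

private lemma m_offdiag {d : ℕ} {μ : Measure (Matrix.unitaryGroup (Fin d) ℂ)}
    (hinv : ∀ V : Matrix.unitaryGroup (Fin d) ℂ, μ.map (fun U => V * U) = μ)
    (a b i j : Fin d) (hij : i ≠ j) :
    ∫ U : Matrix.unitaryGroup (Fin d) ℂ,
      star ((U : Matrix (Fin d) (Fin d) ℂ) i a) * (U : Matrix (Fin d) (Fin d) ℂ) j b ∂μ = 0 := by
  classical
  set D : Matrix (Fin d) (Fin d) ℂ :=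
    Matrix.diagonal (fun k => if k = i then (-1 : ℂ) else 1) with hD
  have hv : (star fun k : Fin d => if k = i then (-1 : ℂ) else 1)
      = fun k : Fin d => if k = i then (-1 : ℂ) else 1 := by
    funext k
    by_cases h : k = i <;> simp [h]
  have hv2 : (fun k : Fin d => (if k = i then (-1 : ℂ) else 1) * (if k = i then (-1 : ℂ) else 1))
      = fun _ : Fin d => (1 : ℂ) := by
    funext k
    by_cases h : k = i <;> simp [h]
  have hstar : star D = D := by
    rw [Matrix.star_eq_conjTranspose, hD, Matrix.diagonal_conjTranspose, hv]
  have hDmem : D ∈ Matrix.unitaryGroup (Fin d) ℂ := by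
    rw [Matrix.mem_unitaryGroup_iff, hstar, hD, Matrix.diagonal_mul_diagonal, hv2,
      Matrix.diagonal_one]
  set V : Matrix.unitaryGroup (Fin d) ℂ := ⟨D, hDmem⟩ with hV
  have hk := haar_key hinv V _ (meas_mij i j a b)
  have he : ∀ U : Matrix.unitaryGroup (Fin d) ℂ,
      star (((V * U : Matrix.unitaryGroup (Fin d) ℂ) : Matrix (Fin d) (Fin d) ℂ) i a) *
        ((V * U : Matrix.unitaryGroup (Fin d) ℂ) : Matrix (Fin d) (Fin d) ℂ) j b
      = -(star ((U : Matrix (Fin d) (Fin d) ℂ) i a) * (U : Matrix (Fin d) (Fin d) ℂ) j b) := by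
    intro U
    have h1 : ((V * U : Matrix.unitaryGroup (Fin d) ℂ) : Matrix (Fin d) (Fin d) ℂ)
        = D * (U : Matrix (Fin d) (Fin d) ℂ) := rfl
    rw [h1, hD]
    rw [Matrix.diagonal_mul, Matrix.diagonal_mul]
    simp [hij.symm]
  rw [show (fun U : Matrix.unitaryGroup (Fin d) ℂ =>
      star (((V * U : Matrix.unitaryGroup (Fin d) ℂ) : Matrix (Fin d) (Fin d) ℂ) i a) *
        ((V * U : Matrix.unitaryGroup (Fin d) ℂ) : Matrix (Fin d) (Fin d) ℂ) j b)
      = fun U : Matrix.unitaryGroup (Fin d) ℂ =>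
        -(star ((U : Matrix (Fin d) (Fin d) ℂ) i a) * (U : Matrix (Fin d) (Fin d) ℂ) j b)
    from funext he] at hk
  rw [integral_neg] at hk
  have h2 : (∫ U : Matrix.unitaryGroup (Fin d) ℂ,
      star ((U : Matrix (Fin d) (Fin d) ℂ) i a) * (U : Matrix (Fin d) (Fin d) ℂ) j b ∂μ)
      + ∫ U : Matrix.unitaryGroup (Fin d) ℂ,
      star ((U : Matrix (Fin d) (Fin d) ℂ) i a) * (U : Matrix (Fin d) (Fin d) ℂ) j b ∂μ = 0 := by
    linear_combination -hk
  exact add_self_eq_zero.mp h2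

private lemma m_diag_eq {d : ℕ} {μ : Measure (Matrix.unitaryGroup (Fin d) ℂ)}
    (hinv : ∀ V : Matrix.unitaryGroup (Fin d) ℂ, μ.map (fun U => V * U) = μ)
    (a b i i' : Fin d) :
    ∫ U : Matrix.unitaryGroup (Fin d) ℂ,
      star ((U : Matrix (Fin d) (Fin d) ℂ) i a) * (U : Matrix (Fin d) (Fin d) ℂ) i b ∂μ
    = ∫ U : Matrix.unitaryGroup (Fin d) ℂ,
      star ((U : Matrix (Fin d) (Fin d) ℂ) i' a) * (U : Matrix (Fin d) (Fin d) ℂ) i' b ∂μ := by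
  classical
  set σ : Equiv.Perm (Fin d) := Equiv.swap i i' with hσ
  set P : Matrix (Fin d) (Fin d) ℂ := σ.permMatrix ℂ with hP
  have hPapp : ∀ k l, P k l = if l = σ k then (1 : ℂ) else 0 := by
    intro k l
    rw [hP]
    simp only [Equiv.Perm.permMatrix, PEquiv.toMatrix_apply, Equiv.toPEquiv_apply,
      Option.mem_def, Option.some.injEq]
    exact if_congr eq_comm rfl rfl
  have hstar : star P = P := by
    rw [Matrix.star_eq_conjTranspose]
    ext k l
    rw [Matrix.conjTranspose_apply, hPapp, hPapp]
    have : k = σ l ↔ l = σ k := by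
      constructor <;> intro h <;> subst h <;> simp [hσ, Equiv.swap_apply_self]
    by_cases h : k = σ l
    · rw [if_pos h, if_pos (this.mp h)]; simp
    · rw [if_neg h, if_neg (fun hc => h (this.mpr hc))]; simp
  have hPmem : P ∈ Matrix.unitaryGroup (Fin d) ℂ := by
    rw [Matrix.mem_unitaryGroup_iff, hstar, hP]
    rw [show σ.permMatrix ℂ * σ.permMatrix ℂ = (σ.permMatrix ℂ).submatrix σ id from
      PEquiv.toMatrix_toPEquiv_mul σ (σ.permMatrix ℂ)]
    ext k l
    rw [Matrix.submatrix_apply, id_eq, ← hP, hPapp, Matrix.one_apply]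
    simp [hσ, Equiv.swap_apply_self, eq_comm]
  set V : Matrix.unitaryGroup (Fin d) ℂ := ⟨P, hPmem⟩ with hV
  have hk := haar_key hinv V _ (meas_mij i i a b)
  have he : ∀ U : Matrix.unitaryGroup (Fin d) ℂ,
      star (((V * U : Matrix.unitaryGroup (Fin d) ℂ) : Matrix (Fin d) (Fin d) ℂ) i a) *
        ((V * U : Matrix.unitaryGroup (Fin d) ℂ) : Matrix (Fin d) (Fin d) ℂ) i b
      = star ((U : Matrix (Fin d) (Fin d) ℂ) i' a) * (U : Matrix (Fin d) (Fin d) ℂ) i' b := by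
    intro U
    have h1 : ((V * U : Matrix.unitaryGroup (Fin d) ℂ) : Matrix (Fin d) (Fin d) ℂ)
        = P * (U : Matrix (Fin d) (Fin d) ℂ) := rfl
    have h2 : P * (U : Matrix (Fin d) (Fin d) ℂ)
        = (U : Matrix (Fin d) (Fin d) ℂ).submatrix σ id :=
      PEquiv.toMatrix_toPEquiv_mul σ _
    rw [h1, h2]
    simp [hσ, Equiv.swap_apply_left]
  rw [show (fun U : Matrix.unitaryGroup (Fin d) ℂ =>
      star (((V * U : Matrix.unitaryGroup (Fin d) ℂ) : Matrix (Fin d) (Fin d) ℂ) i a) *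
        ((V * U : Matrix.unitaryGroup (Fin d) ℂ) : Matrix (Fin d) (Fin d) ℂ) i b)
      = fun U : Matrix.unitaryGroup (Fin d) ℂ =>
        star ((U : Matrix (Fin d) (Fin d) ℂ) i' a) * (U : Matrix (Fin d) (Fin d) ℂ) i' b
    from funext he] at hk
  exact hk.symm

/-- First moment of the Haar measure on the unitary group `U(d)`:
`∫ U† O U dμ_H(U) = (Tr O / d) • I`, stated entrywise. The Haar probability
measure is characterized as a left-invariant probability measure on `U(d)`. -/
theorem first_moment_haar_unitary (d : ℕ) (hd : 1 ≤ d)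
    (μ : Measure (Matrix.unitaryGroup (Fin d) ℂ)) [IsProbabilityMeasure μ]
    (hinv : ∀ V : Matrix.unitaryGroup (Fin d) ℂ, μ.map (fun U => V * U) = μ)
    (O : Matrix (Fin d) (Fin d) ℂ) (a b : Fin d) :
    ∫ U : Matrix.unitaryGroup (Fin d) ℂ,
        (((U : Matrix (Fin d) (Fin d) ℂ))ᴴ * O * (U : Matrix (Fin d) (Fin d) ℂ)) a b ∂μ
      = ((Matrix.trace O / (d : ℂ)) • (1 : Matrix (Fin d) (Fin d) ℂ)) a b := by
  classical
  have hd0 : (d : ℂ) ≠ 0 := by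
    simp only [ne_eq, Nat.cast_eq_zero]
    omega
  set m : Fin d → Fin d → ℂ := fun i j =>
    ∫ U : Matrix.unitaryGroup (Fin d) ℂ,
      star ((U : Matrix (Fin d) (Fin d) ℂ) i a) * (U : Matrix (Fin d) (Fin d) ℂ) j b ∂μ with hm
  -- sum of diagonal m's
  have hsum : ∑ i : Fin d, m i i = if a = b then (1 : ℂ) else 0 := by
    rw [hm, ← integral_finset_sum _ (fun i _ => int_mij i i a b)]
    have hpt : ∀ U : Matrix.unitaryGroup (Fin d) ℂ,
        ∑ i : Fin d, star ((U : Matrix (Fin d) (Fin d) ℂ) i a) *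
          (U : Matrix (Fin d) (Fin d) ℂ) i b = if a = b then (1 : ℂ) else 0 := by
      intro U
      have h : (star (U : Matrix (Fin d) (Fin d) ℂ) * (U : Matrix (Fin d) (Fin d) ℂ)) a b
          = (1 : Matrix (Fin d) (Fin d) ℂ) a b := by
        rw [Matrix.mem_unitaryGroup_iff'.mp U.2]
      simpa [Matrix.mul_apply, Matrix.star_apply, Matrix.one_apply] using h
    rw [show (fun U : Matrix.unitaryGroup (Fin d) ℂ =>
        ∑ i : Fin d, star ((U : Matrix (Fin d) (Fin d) ℂ) i a) *
          (U : Matrix (Fin d) (Fin d) ℂ) i b)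
      = fun _ : Matrix.unitaryGroup (Fin d) ℂ => if a = b then (1 : ℂ) else 0
      from funext hpt]
    simp
  -- each diagonal m equals (δ_ab)/d
  have hdiag : ∀ i : Fin d, m i i = (if a = b then (1 : ℂ) else 0) / d := by
    intro i
    have hall : ∑ i' : Fin d, m i' i' = (d : ℂ) * m i i := by
      rw [Finset.sum_congr rfl (fun i' _ => (m_diag_eq hinv a b i' i : m i' i' = m i i))]
      rw [Finset.sum_const, Finset.card_univ, Fintype.card_fin, nsmul_eq_mul]
    have hsum' := hsum
    rw [hall] at hsum'
    field_simp
    linear_combination hsum'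
  -- expand the integrand
  have hpt2 : ∀ U : Matrix.unitaryGroup (Fin d) ℂ,
      (((U : Matrix (Fin d) (Fin d) ℂ))ᴴ * O * (U : Matrix (Fin d) (Fin d) ℂ)) a b
      = ∑ k : Fin d, ∑ i : Fin d, O i k *
          (star ((U : Matrix (Fin d) (Fin d) ℂ) i a) * (U : Matrix (Fin d) (Fin d) ℂ) k b) := by
    intro U
    simp only [Matrix.mul_apply, Matrix.conjTranspose_apply, Finset.sum_mul]
    apply Finset.sum_congr rfl
    intro k _
    apply Finset.sum_congr rfl
    intro i _
    ring
  rw [show (fun U : Matrix.unitaryGroup (Fin d) ℂ =>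
      (((U : Matrix (Fin d) (Fin d) ℂ))ᴴ * O * (U : Matrix (Fin d) (Fin d) ℂ)) a b)
    = fun U : Matrix.unitaryGroup (Fin d) ℂ => ∑ k : Fin d, ∑ i : Fin d, O i k *
        (star ((U : Matrix (Fin d) (Fin d) ℂ) i a) * (U : Matrix (Fin d) (Fin d) ℂ) k b)
    from funext hpt2]
  rw [integral_finset_sum _ (fun k _ =>
    integrable_finset_sum _ (fun i _ => (int_mij i k a b).const_mul (O i k)))]
  have hswap : ∀ k ∈ Finset.univ, (∫ U : Matrix.unitaryGroup (Fin d) ℂ,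
      ∑ i : Fin d, O i k * (star ((U : Matrix (Fin d) (Fin d) ℂ) i a) *
        (U : Matrix (Fin d) (Fin d) ℂ) k b) ∂μ) = O k k * m k k := by
    intro k _
    rw [integral_finset_sum _ (fun i _ => (int_mij i k a b).const_mul (O i k))]
    have : ∀ i : Fin d, (∫ U : Matrix.unitaryGroup (Fin d) ℂ,
        O i k * (star ((U : Matrix (Fin d) (Fin d) ℂ) i a) *
          (U : Matrix (Fin d) (Fin d) ℂ) k b) ∂μ) = O i k * m i k := by
      intro i
      simp only [hm]
      rw [MeasureTheory.integral_const_mul]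
    rw [Finset.sum_congr rfl (fun i _ => this i)]
    refine Finset.sum_eq_single k (fun i _ hik => ?_) (by simp)
    simp only [hm]
    simp only [m_offdiag hinv a b i k hik, mul_zero]
  rw [Finset.sum_congr rfl hswap]
  rw [Finset.sum_congr rfl (fun k _ => by rw [hdiag k])]
  rw [Matrix.smul_apply, Matrix.one_apply, Matrix.trace, smul_eq_mul]
  rw [← Finset.sum_mul]
  by_cases hab : a = b
  · simp only [hab, if_true, Matrix.diag]
    ring
  · simp [hab, Matrix.diag]
end

section
/- Let ρ be a density matrix of a pure state and H_V a Hermitian matrix on a d-dimensional Hilbert space (d = 2^n), and let A_l be Hermitian. If E is drawn from a unitary 2-design ensemble, then the expectation over E of the derivative i·Tr(ρ E† [A_l, E H_V E†] E) is zero, i.e., E_E[ i⟨ψ|E†[A_l, E H_V E†]E|ψ⟩ ] = 0. -/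
open MeasureTheory Matrix Kronecker

/-!
Using `E†E = 1` and cyclicity of the trace, the gradient becomes `i Tr(E [H_V, ρ] E† A)`, which
depends on `E` only through the first moment `E C E†` of `C = [H_V, ρ]`. So the ensemble average
equals `i Tr(T A)`, where `T = ∫ U C U† dμ` is the Haar twirl of `C`. Left invariance of `μ` makes
`T` commute with every unitary; since the unitaries span all matrices, `T` is a scalar, and as
`Tr T = Tr C = 0` it vanishes.
-/

instance Matrix.borelSpace {m n α : Type*} [Countable m] [Countable n] [TopologicalSpace α]
    [MeasurableSpace α] [SecondCountableTopology α] [BorelSpace α] : BorelSpace (Matrix m n α) :=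
  inferInstanceAs (BorelSpace (m → n → α))

theorem CStarAlgebra.mem_center_of_forall_commute_unitary {A : Type*} [CStarAlgebra A] {a : A}
    (h : ∀ u ∈ unitary A, Commute u a) : a ∈ Set.center A := by
  have hspan :
      Submodule.span ℂ (unitary A : Set A) ≤ (Subalgebra.centralizer ℂ {a}).toSubmodule :=
    Submodule.span_le.mpr fun u hu => by
      simpa [Subalgebra.mem_centralizer_iff, Set.mem_centralizer_iff] using (h u hu).eq.symm
  rw [CStarAlgebra.span_unitary, top_le_iff] at hspan
  refine Semigroup.mem_center_iff.mpr fun b => ?_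
  have hb : b ∈ (Subalgebra.centralizer ℂ {a}).toSubmodule := hspan ▸ Submodule.mem_top
  exact (Set.mem_centralizer_iff.mp ((Subalgebra.mem_centralizer_iff ℂ).mp hb) a rfl).symm

namespace Matrix

variable {n : Type*} [Fintype n] [DecidableEq n]

theorem trace_conj_commutator {R : Type*} [CommRing R] [StarRing R] {E : Matrix n n R}
    (hE : Eᴴ * E = 1) (ρ X A : Matrix n n R) :
    (ρ * Eᴴ * (A * E * X * Eᴴ - E * X * Eᴴ * A) * E).trace
      = (E * (X * ρ - ρ * X) * Eᴴ * A).trace := by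
  have hE' (Y : Matrix n n R) : Eᴴ * (E * Y) = Y := by rw [← mul_assoc, hE, one_mul]
  calc (ρ * Eᴴ * (A * E * X * Eᴴ - E * X * Eᴴ * A) * E).trace
      = (ρ * (Eᴴ * A * E) * X).trace - (ρ * X * (Eᴴ * A * E)).trace := by
        rw [← trace_sub]
        simp only [mul_sub, sub_mul, mul_assoc, hE, hE', mul_one]
    _ = ((X * ρ - ρ * X) * (Eᴴ * A * E)).trace := by
        rw [trace_mul_cycle, sub_mul, trace_sub]
    _ = (E * (X * ρ - ρ * X) * Eᴴ * A).trace := by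
        rw [trace_mul_comm (E * _ * Eᴴ) A, ← mul_assoc A, trace_mul_comm _ Eᴴ,
          trace_mul_comm (X * ρ - ρ * X)]
        simp only [mul_assoc]

section UnitaryTwirl

-- The L2 operator norm makes `Matrix n n ℂ` a C⋆-algebra, in which unitaries have norm one.
open scoped Matrix.Norms.L2Operator

theorem mem_range_scalar_of_forall_commute_unitary {T : Matrix n n ℂ}
    (h : ∀ U ∈ unitaryGroup n ℂ, Commute U T) : T ∈ Set.range (scalar n) := by
  rw [← center_eq_range]
  exact CStarAlgebra.mem_center_of_forall_commute_unitary h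

noncomputable def unitaryTwirl (μ : Measure (unitaryGroup n ℂ)) (M : Matrix n n ℂ) :
    Matrix n n ℂ :=
  ∫ U, (U : Matrix n n ℂ) * M * (U : Matrix n n ℂ)ᴴ ∂μ

theorem continuous_unitary_conj (M : Matrix n n ℂ) :
    Continuous fun U : unitaryGroup n ℂ => (U : Matrix n n ℂ) * M * (U : Matrix n n ℂ)ᴴ := by
  fun_prop

theorem integrable_unitary_conj (μ : Measure (unitaryGroup n ℂ)) [IsFiniteMeasure μ]
    (M : Matrix n n ℂ) :
    Integrable (fun U : unitaryGroup n ℂ => (U : Matrix n n ℂ) * M * (U : Matrix n n ℂ)ᴴ) μ := by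
  refine .of_bound (continuous_unitary_conj M).aestronglyMeasurable ‖M‖ (ae_of_all _ fun U => ?_)
  rw [← star_eq_conjTranspose, ← Unitary.coe_star, CStarRing.norm_mul_coe_unitary,
    CStarRing.norm_coe_unitary_mul]

theorem unitaryTwirl_apply (μ : Measure (unitaryGroup n ℂ)) [IsFiniteMeasure μ]
    (M : Matrix n n ℂ) (a b : n) :
    unitaryTwirl μ M a b = ∫ U, ((U : Matrix n n ℂ) * M * (U : Matrix n n ℂ)ᴴ) a b ∂μ :=
  ((entryLinearMap ℂ ℂ a b).toContinuousLinearMap.integral_comp_comm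
    (integrable_unitary_conj μ M)).symm

theorem trace_unitaryTwirl (μ : Measure (unitaryGroup n ℂ)) [IsProbabilityMeasure μ]
    (M : Matrix n n ℂ) : (unitaryTwirl μ M).trace = M.trace := by
  have hcycle (U : unitaryGroup n ℂ) :
      ((U : Matrix n n ℂ) * M * (U : Matrix n n ℂ)ᴴ).trace = M.trace := by
    rw [trace_mul_cycle, ← star_eq_conjTranspose, Unitary.coe_star_mul_self, one_mul]
  calc (unitaryTwirl μ M).trace
      = ∫ U, ((U : Matrix n n ℂ) * M * (U : Matrix n n ℂ)ᴴ).trace ∂μ :=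
        ((traceLinearMap n ℂ ℂ).toContinuousLinearMap.integral_comp_comm
          (integrable_unitary_conj μ M)).symm
    _ = M.trace := by simp [hcycle]

theorem conj_unitaryTwirl (μ : Measure (unitaryGroup n ℂ)) [IsFiniteMeasure μ]
    (hinv : ∀ V : unitaryGroup n ℂ, μ.map (fun U => V * U) = μ) (M : Matrix n n ℂ)
    (V : unitaryGroup n ℂ) :
    (V : Matrix n n ℂ) * unitaryTwirl μ M * (V : Matrix n n ℂ)ᴴ = unitaryTwirl μ M := by
  calc (V : Matrix n n ℂ) * unitaryTwirl μ M * (V : Matrix n n ℂ)ᴴ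
      = ∫ U, ((V * U : unitaryGroup n ℂ) : Matrix n n ℂ) * M *
          ((V * U : unitaryGroup n ℂ) : Matrix n n ℂ)ᴴ ∂μ := by
        rw [unitaryTwirl, ← ContinuousLinearMap.mulLeftRight_apply ℂ,
          ← ContinuousLinearMap.integral_comp_comm _ (integrable_unitary_conj μ M)]
        simp [conjTranspose_mul, mul_assoc]
    _ = unitaryTwirl μ M := by
        rw [← integral_map (continuous_const_mul V).measurable.aemeasurable
          (continuous_unitary_conj M).aestronglyMeasurable, hinv V, unitaryTwirl]

theorem unitaryTwirl_mem_range_scalar (μ : Measure (unitaryGroup n ℂ)) [IsFiniteMeasure μ]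
    (hinv : ∀ V : unitaryGroup n ℂ, μ.map (fun U => V * U) = μ) (M : Matrix n n ℂ) :
    unitaryTwirl μ M ∈ Set.range (scalar n) := by
  refine mem_range_scalar_of_forall_commute_unitary fun V hV => ?_
  calc V * unitaryTwirl μ M = V * unitaryTwirl μ M * Vᴴ * V := by
        rw [mul_assoc _ Vᴴ, ← star_eq_conjTranspose, Unitary.star_mul_self_of_mem hV, mul_one]
    _ = unitaryTwirl μ M * V := by rw [conj_unitaryTwirl μ hinv M ⟨V, hV⟩]

theorem unitaryTwirl_eq_zero_of_trace_eq_zero (μ : Measure (unitaryGroup n ℂ))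
    [IsProbabilityMeasure μ] (hinv : ∀ V : unitaryGroup n ℂ, μ.map (fun U => V * U) = μ)
    {M : Matrix n n ℂ} (hM : M.trace = 0) : unitaryTwirl μ M = 0 := by
  obtain ⟨c, hc⟩ := unitaryTwirl_mem_range_scalar μ hinv M
  have htrace : (Fintype.card n : ℂ) * c = 0 := by
    rw [← hM, ← trace_unitaryTwirl μ M, ← hc]
    simp
  rcases mul_eq_zero.mp htrace with hcard | rfl
  · have : IsEmpty n := Fintype.card_eq_zero_iff.mp (by exact_mod_cast hcard)
    exact Subsingleton.elim _ _
  · rw [← hc, map_zero]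

theorem sum_smul_conj_eq_unitaryTwirl {ι : Type*} [Fintype ι] (μ : Measure (unitaryGroup n ℂ))
    [IsFiniteMeasure μ] (w : ι → ℂ) (E : ι → unitaryGroup n ℂ) (M : Matrix n n ℂ)
    (hdesign : ∀ a b, ∑ i, w i * ((E i : Matrix n n ℂ) * M * (E i : Matrix n n ℂ)ᴴ) a b
      = ∫ U, ((U : Matrix n n ℂ) * M * (U : Matrix n n ℂ)ᴴ) a b ∂μ) :
    ∑ i, w i • ((E i : Matrix n n ℂ) * M * (E i : Matrix n n ℂ)ᴴ) = unitaryTwirl μ M := by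
  ext a b
  simp only [unitaryTwirl_apply, ← hdesign, sum_apply, smul_apply, smul_eq_mul]

end UnitaryTwirl

end Matrix

theorem expectation_gradient_two_design_zero_general
    (d : ℕ)
    -- the Haar probability measure on U(d), characterized by left invariance
    (μ : Measure (Matrix.unitaryGroup (Fin d) ℂ)) [IsProbabilityMeasure μ]
    (hinv : ∀ V : Matrix.unitaryGroup (Fin d) ℂ, μ.map (fun U => V * U) = μ)
    -- the finite ensemble {p_i, E_i}
    (ι : Type) [Fintype ι] (p : ι → ℝ)
    (E : ι → Matrix.unitaryGroup (Fin d) ℂ)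
    -- first-moment 2-design property
    (hdesign1 : ∀ M : Matrix (Fin d) (Fin d) ℂ, ∀ a b : Fin d,
      ∑ i, (p i : ℂ) *
          (((E i : Matrix (Fin d) (Fin d) ℂ)) * M * ((E i : Matrix (Fin d) (Fin d) ℂ))ᴴ) a b
        = ∫ U : Matrix.unitaryGroup (Fin d) ℂ,
            ((U : Matrix (Fin d) (Fin d) ℂ) * M * (U : Matrix (Fin d) (Fin d) ℂ)ᴴ) a b ∂μ)
    -- the pure state ρ = |ψ⟩⟨ψ|
    (ρ : Matrix (Fin d) (Fin d) ℂ)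
    -- H_V = V† H V with H Hermitian and V unitary
    (V : Matrix.unitaryGroup (Fin d) ℂ) (HV : Matrix (Fin d) (Fin d) ℂ)
    -- the Hermitian generator A_l of the adversarial circuit
    (A : Matrix (Fin d) (Fin d) ℂ) :
    ∑ i, (p i : ℂ) *
        (Complex.I * Matrix.trace (ρ * ((E i : Matrix (Fin d) (Fin d) ℂ))ᴴ *
          (A * ((E i : Matrix (Fin d) (Fin d) ℂ)) * HV * ((E i : Matrix (Fin d) (Fin d) ℂ))ᴴ -
           ((E i : Matrix (Fin d) (Fin d) ℂ)) * HV * ((E i : Matrix (Fin d) (Fin d) ℂ))ᴴ * A) *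
          ((E i : Matrix (Fin d) (Fin d) ℂ)))) = 0 := by
  set C := HV * ρ - ρ * HV
  have hC : C.trace = 0 := by rw [trace_sub, trace_mul_comm, sub_self]
  have hunitary (i : ι) : (E i : Matrix (Fin d) (Fin d) ℂ)ᴴ * E i = 1 := by
    rw [← star_eq_conjTranspose, Unitary.coe_star_mul_self]
  calc _ = Complex.I * ∑ i, (p i : ℂ) *
          ((E i : Matrix (Fin d) (Fin d) ℂ) * C * (E i : Matrix (Fin d) (Fin d) ℂ)ᴴ * A).trace := by
        rw [Finset.mul_sum]
        refine Finset.sum_congr rfl fun i _ => ?_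
        rw [trace_conj_commutator (hunitary i)]
        ring
    _ = Complex.I * ((∑ i, (p i : ℂ) • ((E i : Matrix (Fin d) (Fin d) ℂ) * C *
          (E i : Matrix (Fin d) (Fin d) ℂ)ᴴ)) * A).trace := by
        simp only [Finset.sum_mul, trace_sum, smul_mul_assoc, trace_smul, smul_eq_mul]
    _ = 0 := by
        rw [sum_smul_conj_eq_unitaryTwirl μ _ E C (hdesign1 C),
          unitaryTwirl_eq_zero_of_trace_eq_zero μ hinv hC, zero_mul, trace_zero, mul_zero]

/-- If `E` is drawn from a unitary 2-design ensemble `{p_i, E_i}` (whose first and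
second moments agree with the Haar measure on `U(d)`), then the expectation over the
ensemble of the adversarial gradient `i Tr(ρ E† [A, E H_V E†] E)` vanishes, where
`ρ = |ψ⟩⟨ψ|` is a pure state, `H_V = V† H V` with `H` Hermitian and `V` unitary,
and `A` (the circuit generator) is Hermitian. -/
theorem expectation_gradient_two_design_zero
    (n : ℕ) (hn : 1 ≤ n) (d : ℕ) (hd : d = 2 ^ n)
    -- the Haar probability measure on U(d), characterized by left invariance
    (μ : Measure (Matrix.unitaryGroup (Fin d) ℂ)) [IsProbabilityMeasure μ]
    (hinv : ∀ V : Matrix.unitaryGroup (Fin d) ℂ, μ.map (fun U => V * U) = μ)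
    -- the finite ensemble {p_i, E_i}
    (ι : Type) [Fintype ι] (p : ι → ℝ) (hp : ∀ i, 0 ≤ p i) (hp1 : ∑ i, p i = 1)
    (E : ι → Matrix.unitaryGroup (Fin d) ℂ)
    -- first-moment 2-design property
    (hdesign1 : ∀ M : Matrix (Fin d) (Fin d) ℂ, ∀ a b : Fin d,
      ∑ i, (p i : ℂ) *
          (((E i : Matrix (Fin d) (Fin d) ℂ)) * M * ((E i : Matrix (Fin d) (Fin d) ℂ))ᴴ) a b
        = ∫ U : Matrix.unitaryGroup (Fin d) ℂ,
            ((U : Matrix (Fin d) (Fin d) ℂ) * M * (U : Matrix (Fin d) (Fin d) ℂ)ᴴ) a b ∂μ)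
    -- second-moment 2-design property (via the Kronecker square)
    (hdesign2 : ∀ M : Matrix (Fin d × Fin d) (Fin d × Fin d) ℂ, ∀ a b : Fin d × Fin d,
      ∑ i, (p i : ℂ) *
          ((((E i : Matrix (Fin d) (Fin d) ℂ)) ⊗ₖ ((E i : Matrix (Fin d) (Fin d) ℂ))) * M *
            (((E i : Matrix (Fin d) (Fin d) ℂ)) ⊗ₖ ((E i : Matrix (Fin d) (Fin d) ℂ)))ᴴ) a b
        = ∫ U : Matrix.unitaryGroup (Fin d) ℂ,
            (((U : Matrix (Fin d) (Fin d) ℂ) ⊗ₖ (U : Matrix (Fin d) (Fin d) ℂ)) * M *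
              ((U : Matrix (Fin d) (Fin d) ℂ) ⊗ₖ (U : Matrix (Fin d) (Fin d) ℂ))ᴴ) a b ∂μ)
    -- the pure state ρ = |ψ⟩⟨ψ|
    (ψ : Fin d → ℂ) (hψ : star ψ ⬝ᵥ ψ = 1) (ρ : Matrix (Fin d) (Fin d) ℂ)
    (hρ : ρ = Matrix.vecMulVec ψ (star ψ))
    -- H_V = V† H V with H Hermitian and V unitary
    (H : Matrix (Fin d) (Fin d) ℂ) (hH : H.IsHermitian)
    (V : Matrix.unitaryGroup (Fin d) ℂ) (HV : Matrix (Fin d) (Fin d) ℂ)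
    (hHV : HV = (V : Matrix (Fin d) (Fin d) ℂ)ᴴ * H * (V : Matrix (Fin d) (Fin d) ℂ))
    -- the Hermitian generator A_l of the adversarial circuit
    (A : Matrix (Fin d) (Fin d) ℂ) (hA : A.IsHermitian) :
    ∑ i, (p i : ℂ) *
        (Complex.I * Matrix.trace (ρ * ((E i : Matrix (Fin d) (Fin d) ℂ))ᴴ *
          (A * ((E i : Matrix (Fin d) (Fin d) ℂ)) * HV * ((E i : Matrix (Fin d) (Fin d) ℂ))ᴴ -
           ((E i : Matrix (Fin d) (Fin d) ℂ)) * HV * ((E i : Matrix (Fin d) (Fin d) ℂ))ᴴ * A) *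
          ((E i : Matrix (Fin d) (Fin d) ℂ)))) = 0 :=
  expectation_gradient_two_design_zero_general d μ hinv ι p E hdesign1 ρ V HV A
end

section
/- Let P = (p₁,...,p_K) and Q = (q₁,...,q_K) be probability vectors with all entries positive such that |ln(p_i/q_i)| ≤ ε for every i. Then D_KL(P‖Q) ≤ 2ε². -/
/-- For `|y| ≤ 1`, `exp y ≤ 1 + y + y²`. -/
lemma exp_le_quadratic {y : ℝ} (hy : |y| ≤ 1) : Real.exp y ≤ 1 + y + y ^ 2 := by
  have h := Real.exp_bound hy (n := 2) (by norm_num)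
  have h2 : ∑ m ∈ Finset.range 2, y ^ m / m.factorial = 1 + y := by
    simp [Finset.sum_range_succ]
  rw [h2] at h
  have habs := (abs_le.mp h).2
  have hsq : |y| ^ 2 = y ^ 2 := sq_abs y
  norm_num [Nat.factorial] at habs
  nlinarith [sq_nonneg y]

/-- If `|ln(p_i/q_i)| ≤ ε` for all `i`, then `D_KL(P‖Q) = ∑ p_i ln(p_i/q_i) ≤ 2ε²`. -/
theorem kl_le_of_bounded_log_ratio (K : ℕ) (hK : 1 ≤ K) (ε : ℝ) (hε : 0 ≤ ε)
    (p q : Fin K → ℝ) (hp : ∀ i, 0 < p i) (hq : ∀ i, 0 < q i)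
    (hp1 : ∑ i, p i = 1) (hq1 : ∑ i, q i = 1)
    (hratio : ∀ i, |Real.log (p i / q i)| ≤ ε) :
    ∑ i, p i * Real.log (p i / q i) ≤ 2 * ε ^ 2 := by
  rcases le_or_gt 1 ε with h1 | h1
  · calc ∑ i, p i * Real.log (p i / q i) ≤ ∑ i, p i * ε := by
          apply Finset.sum_le_sum
          intro i _
          exact mul_le_mul_of_nonneg_left ((le_abs_self _).trans (hratio i)) (hp i).le
      _ = ε := by rw [← Finset.sum_mul, hp1, one_mul]
      _ ≤ 2 * ε ^ 2 := by nlinarith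
  · -- ε < 1
    have key : ∀ i, p i * Real.log (p i / q i)
        ≤ p i * (Real.log (p i / q i)) ^ 2 + (p i - q i) := by
      intro i
      set x := Real.log (p i / q i) with hx
      have hxb : |x| ≤ 1 := (hratio i).trans h1.le
      have hqx : q i = p i * Real.exp (-x) := by
        rw [hx, Real.exp_neg, Real.exp_log (div_pos (hp i) (hq i))]
        field_simp [(hp i).ne', (hq i).ne']
      have hb : Real.exp (-x) ≤ 1 + (-x) + (-x) ^ 2 :=
        exp_le_quadratic (by rwa [abs_neg])
      nlinarith [hp i, hq i]
    calc ∑ i, p i * Real.log (p i / q i)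
        ≤ ∑ i, (p i * (Real.log (p i / q i)) ^ 2 + (p i - q i)) :=
          Finset.sum_le_sum fun i _ => key i
      _ = ∑ i, p i * (Real.log (p i / q i)) ^ 2 := by
          rw [Finset.sum_add_distrib, Finset.sum_sub_distrib, hp1, hq1]; ring
      _ ≤ ∑ i, p i * ε ^ 2 := by
          apply Finset.sum_le_sum
          intro i _
          apply mul_le_mul_of_nonneg_left _ (hp i).le
          calc (Real.log (p i / q i)) ^ 2 = |Real.log (p i / q i)| ^ 2 := (sq_abs _).symm
            _ ≤ ε ^ 2 := pow_le_pow_left₀ (abs_nonneg _) (hratio i) 2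
      _ = ε ^ 2 := by rw [← Finset.sum_mul, hp1, one_mul]
      _ ≤ 2 * ε ^ 2 := by nlinarith [sq_nonneg ε]
end

section
/- Let Q map each input ρ to a probability distribution Q(ρ) on a finite label set, and suppose for every ρ and every perturbation δ with ‖δ‖ ≤ τ, all components satisfy |ln(Q(ρ)_i / Q(ρ+δ)_i)| ≤ ε. Then for independent samples s₁ ∼ Q(ρ), s₂ ∼ Q(ρ+δ), the misclassification probability satisfies Pr(s₁ ≠ s₂) ≤ 1 − e^{−2ε²}·e^{−H(Q(ρ))}, and hence the adversarial risk R(τ) = E_ρ[sup_{‖δ‖≤τ} Pr(s₁≠s₂)] is at most 1 − e^{−2ε²}·E_ρ[e^{−H(Q(ρ))}]. -/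
open MeasureTheory

/-- Shannon entropy (natural log) of a probability vector. -/
noncomputable def shannonEntropy {K : ℕ} (p : Fin K → ℝ) : ℝ :=
  -∑ i, p i * Real.log (p i)


/-- `x (e^x - 1) ≤ ε (e^ε - 1)` when `|x| ≤ ε`. -/
lemma aux_term {x ε : ℝ} (hε : 0 ≤ ε) (hx : |x| ≤ ε) :
    x * (Real.exp x - 1) ≤ ε * (Real.exp ε - 1) := by
  obtain ⟨h1, h2⟩ := abs_le.mp hx
  rcases le_or_gt 0 x with hx0 | hx0
  · have he : Real.exp x ≤ Real.exp ε := Real.exp_le_exp.mpr h2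
    have h1e : 1 ≤ Real.exp x := Real.one_le_exp_iff.mpr hx0
    nlinarith
  · -- x < 0 : x(e^x-1) = (-x)(1-e^x) ≤ (-x)(-x) ≤ ε² ≤ ε(e^ε-1)
    have h3 : x + 1 ≤ Real.exp x := Real.add_one_le_exp x
    have h4 : ε + 1 ≤ Real.exp ε := Real.add_one_le_exp ε
    nlinarith

/-- KL divergence bound: if `|log (p i / q i)| ≤ ε` then `D(p‖q) ≤ 2 ε²`. -/
lemma aux_kl {K : ℕ} {p q : Fin K → ℝ} (hp : ∀ i, 0 < p i) (hq : ∀ i, 0 < q i)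
    (hp1 : ∑ i, p i = 1) (hq1 : ∑ i, q i = 1) {ε : ℝ} (hε : 0 ≤ ε)
    (h : ∀ i, |Real.log (p i / q i)| ≤ ε) :
    ∑ i, p i * Real.log (p i / q i) ≤ 2 * ε ^ 2 := by
  set x : Fin K → ℝ := fun i => Real.log (q i / p i) with hxdef
  have hxb : ∀ i, |x i| ≤ ε := by
    intro i
    have : x i = -Real.log (p i / q i) := by
      rw [hxdef]; rw [← Real.log_inv]; field_simp
    rw [this, abs_neg]; exact h i
  have hxe : ∀ i, p i * Real.exp (x i) = q i := by
    intro i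
    rw [hxdef, Real.exp_log (div_pos (hq i) (hp i))]
    field_simp
    rw [mul_comm, mul_div_assoc, div_self (hp i).ne', mul_one]
  have hkey : ∑ i, p i * Real.log (p i / q i) = -∑ i, p i * x i := by
    rw [← Finset.sum_neg_distrib]
    apply Finset.sum_congr rfl
    intro i _
    have : Real.log (p i / q i) = -x i := by
      rw [hxdef, ← Real.log_inv]; congr 1; field_simp
    rw [this]; ring
  rw [hkey]
  rcases le_or_gt 1 ε with h1 | h1
  · -- crude bound: -∑ p x ≤ ε ≤ 2ε²
    have : -∑ i, p i * x i ≤ ∑ i, p i * ε := by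
      rw [← Finset.sum_neg_distrib]
      apply Finset.sum_le_sum
      intro i _
      have := (abs_le.mp (hxb i)).1
      nlinarith [(hp i).le]
    rw [← Finset.sum_mul, hp1, one_mul] at this
    nlinarith
  · -- refined bound
    have h0 : 0 ≤ ∑ i, p i * (x i * Real.exp (x i)) := by
      have hsum : ∑ i, p i * (Real.exp (x i) - 1) = 0 := by
        simp only [mul_sub, mul_one, Finset.sum_sub_distrib]
        simp only [hxe, hq1, hp1, sub_self]
      calc (0:ℝ) = ∑ i, p i * (Real.exp (x i) - 1) := hsum.symm
        _ ≤ ∑ i, p i * (x i * Real.exp (x i)) := by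
            apply Finset.sum_le_sum
            intro i _
            apply mul_le_mul_of_nonneg_left _ (hp i).le
            have h3 : -(x i) + 1 ≤ Real.exp (-(x i)) := Real.add_one_le_exp _
            have h4 : Real.exp (-(x i)) * Real.exp (x i) = 1 := by
              rw [← Real.exp_add]; simp
            nlinarith [Real.exp_pos (x i)]
    have hterm : ∑ i, p i * (x i * Real.exp (x i) - x i) ≤ ε * (Real.exp ε - 1) := by
      calc ∑ i, p i * (x i * Real.exp (x i) - x i)
          ≤ ∑ i, p i * (ε * (Real.exp ε - 1)) := by
            apply Finset.sum_le_sum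
            intro i _
            apply mul_le_mul_of_nonneg_left _ (hp i).le
            have := aux_term hε (hxb i)
            nlinarith
        _ = ε * (Real.exp ε - 1) := by rw [← Finset.sum_mul, hp1, one_mul]
    have hsplit : -∑ i, p i * x i
        = ∑ i, p i * (x i * Real.exp (x i) - x i) - ∑ i, p i * (x i * Real.exp (x i)) := by
      rw [← Finset.sum_sub_distrib, ← Finset.sum_neg_distrib]
      apply Finset.sum_congr rfl; intro i _; ring
    have hexpb : Real.exp ε ≤ 1 + ε + ε ^ 2 * 3 / 4 := by
      have := Real.exp_bound' hε h1.le (n := 2) (by norm_num)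
      simp [Finset.sum_range_succ] at this
      nlinarith
    rw [hsplit]
    nlinarith

/-- The collision probability lower bound. -/
lemma aux_collision {K : ℕ} {p q : Fin K → ℝ} (hp : ∀ i, 0 < p i) (hq : ∀ i, 0 < q i)
    (hp1 : ∑ i, p i = 1) (hq1 : ∑ i, q i = 1) {ε : ℝ} (hε : 0 ≤ ε)
    (h : ∀ i, |Real.log (p i / q i)| ≤ ε) :
    Real.exp (-(2 * ε ^ 2)) * Real.exp (-shannonEntropy p) ≤ ∑ i, p i * q i := by
  have hKpos : 0 < K := by
    by_contra hc
    push_neg at hc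
    interval_cases K
    simp at hp1
  haveI : Nonempty (Fin K) := ⟨⟨0, hKpos⟩⟩
  set S := ∑ i, p i * q i with hS
  have hSpos : 0 < S := Finset.sum_pos (fun i _ => mul_pos (hp i) (hq i)) Finset.univ_nonempty
  -- Jensen: ∑ p log q ≤ log S
  have hjensen : ∑ i, p i * Real.log (q i) ≤ Real.log S := by
    have : ∀ i, p i * Real.log (q i) ≤ p i * (Real.log S + q i / S - 1) := by
      intro i
      apply mul_le_mul_of_nonneg_left _ (hp i).le
      have hlog : Real.log (q i) = Real.log S + Real.log (q i / S) := by
        rw [Real.log_div (hq i).ne' hSpos.ne']; ring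
      rw [hlog]
      have := Real.log_le_sub_one_of_pos (div_pos (hq i) hSpos)
      linarith
    calc ∑ i, p i * Real.log (q i) ≤ ∑ i, p i * (Real.log S + q i / S - 1) :=
          Finset.sum_le_sum (fun i _ => this i)
      _ = Real.log S := by
          simp only [mul_sub, mul_add, Finset.sum_sub_distrib, Finset.sum_add_distrib,
            ← Finset.sum_mul, hp1, one_mul]
          simp only [mul_div_assoc']
          rw [← Finset.sum_div, ← hS, div_self hSpos.ne']
          ring
  have hkl := aux_kl hp hq hp1 hq1 hε h
  have hdecomp : ∑ i, p i * Real.log (q i)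
      = -shannonEntropy p - ∑ i, p i * Real.log (p i / q i) := by
    unfold shannonEntropy
    rw [neg_neg, ← Finset.sum_sub_distrib]
    apply Finset.sum_congr rfl
    intro i _
    rw [Real.log_div (hp i).ne' (hq i).ne']
    ring
  have h1 : -(2 * ε ^ 2) + -shannonEntropy p ≤ Real.log S := by
    have : -(2 * ε ^ 2) + -shannonEntropy p ≤ ∑ i, p i * Real.log (q i) := by
      rw [hdecomp]; linarith
    linarith
  calc Real.exp (-(2 * ε ^ 2)) * Real.exp (-shannonEntropy p)
      = Real.exp (-(2 * ε ^ 2) + -shannonEntropy p) := (Real.exp_add _ _).symm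
    _ ≤ Real.exp (Real.log S) := Real.exp_le_exp.mpr h1
    _ = S := Real.exp_log hSpos

/-- If a classifier `Q` maps inputs to strictly positive probability vectors and
satisfies the `ε`-bounded log-ratio (differential privacy) property under perturbations
of norm at most `τ`, then the misclassification probability of independent samples
`s₁ ∼ Q(ρ)`, `s₂ ∼ Q(ρ+δ)` satisfies `Pr(s₁ ≠ s₂) ≤ 1 − e^{−2ε²} e^{−H(Q(ρ))}`, and the
adversarial risk `E_ρ[sup_{‖δ‖≤τ} Pr(s₁ ≠ s₂)]` is at most
`1 − e^{−2ε²} E_ρ[e^{−H(Q(ρ))}]`. -/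
theorem adversarial_risk_of_differential_privacy
    {ι : Type*} [NormedAddCommGroup ι] [MeasurableSpace ι] [BorelSpace ι]
    (μ : Measure ι) [IsProbabilityMeasure μ]
    (K : ℕ) (hK : 1 ≤ K) (Q : ι → Fin K → ℝ) (hQmeas : Measurable Q)
    (hQpos : ∀ ρ i, 0 < Q ρ i) (hQ1 : ∀ ρ, ∑ i, Q ρ i = 1)
    (τ ε : ℝ) (hτ : 0 ≤ τ) (hε : 0 ≤ ε)
    (hdp : ∀ ρ δ : ι, ‖δ‖ ≤ τ → ∀ i, |Real.log (Q ρ i / Q (ρ + δ) i)| ≤ ε) :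
    (∀ ρ δ : ι, ‖δ‖ ≤ τ →
        1 - ∑ i, Q ρ i * Q (ρ + δ) i
          ≤ 1 - Real.exp (-(2 * ε ^ 2)) * Real.exp (-shannonEntropy (Q ρ))) ∧
      ∫ ρ, (⨆ δ : {δ : ι // ‖δ‖ ≤ τ}, (1 - ∑ i, Q ρ i * Q (ρ + (δ : ι)) i)) ∂μ
        ≤ 1 - Real.exp (-(2 * ε ^ 2)) * ∫ ρ, Real.exp (-shannonEntropy (Q ρ)) ∂μ := by
  have hpoint : ∀ ρ δ : ι, ‖δ‖ ≤ τ →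
      1 - ∑ i, Q ρ i * Q (ρ + δ) i
        ≤ 1 - Real.exp (-(2 * ε ^ 2)) * Real.exp (-shannonEntropy (Q ρ)) := by
    intro ρ δ hδ
    have := aux_collision (hQpos ρ) (hQpos (ρ + δ)) (hQ1 ρ) (hQ1 (ρ + δ)) hε (hdp ρ δ hδ)
    linarith
  refine ⟨hpoint, ?_⟩
  haveI : Nonempty {δ : ι // ‖δ‖ ≤ τ} := ⟨⟨0, by simpa using hτ⟩⟩
  set c : ℝ := Real.exp (-(2 * ε ^ 2)) with hc
  have hc0 : 0 < c := Real.exp_pos _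
  have hc1 : c ≤ 1 := Real.exp_le_one_iff.mpr (by nlinarith)
  set e : ι → ℝ := fun ρ => Real.exp (-shannonEntropy (Q ρ)) with he
  set f : ι → ℝ := fun ρ => ⨆ δ : {δ : ι // ‖δ‖ ≤ τ}, (1 - ∑ i, Q ρ i * Q (ρ + (δ : ι)) i)
    with hf
  -- entropy is nonnegative
  have hH0 : ∀ ρ, 0 ≤ shannonEntropy (Q ρ) := by
    intro ρ
    unfold shannonEntropy
    rw [neg_nonneg]
    apply Finset.sum_nonpos
    intro i _
    have hle1 : Q ρ i ≤ 1 := by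
      rw [← hQ1 ρ]
      exact Finset.single_le_sum (fun j _ => (hQpos ρ j).le) (Finset.mem_univ i)
    exact mul_nonpos_of_nonneg_of_nonpos (hQpos ρ i).le
      (Real.log_nonpos (hQpos ρ i).le hle1)
  have he01 : ∀ ρ, 0 < e ρ ∧ e ρ ≤ 1 := fun ρ =>
    ⟨Real.exp_pos _, Real.exp_le_one_iff.mpr (neg_nonpos.mpr (hH0 ρ))⟩
  -- measurability of e
  have hemeas : Measurable e := by
    apply Real.measurable_exp.comp
    apply Measurable.neg
    unfold shannonEntropy
    apply Measurable.neg
    apply Finset.measurable_sum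
    intro i _
    exact ((measurable_pi_apply i).comp hQmeas).mul
      (Real.measurable_log.comp ((measurable_pi_apply i).comp hQmeas))
  have heint : Integrable e μ := by
    apply Integrable.mono' (integrable_const (1 : ℝ)) hemeas.aestronglyMeasurable
    filter_upwards with ρ
    rw [Real.norm_eq_abs, abs_of_pos (he01 ρ).1]
    exact (he01 ρ).2
  have heI0 : 0 ≤ ∫ ρ, e ρ ∂μ := integral_nonneg fun ρ => (he01 ρ).1.le
  have heI1 : ∫ ρ, e ρ ∂μ ≤ 1 := by
    calc ∫ ρ, e ρ ∂μ ≤ ∫ _, (1 : ℝ) ∂μ :=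
          integral_mono heint (integrable_const 1) fun ρ => (he01 ρ).2
      _ = 1 := by simp
  have hfg : ∀ ρ, f ρ ≤ 1 - c * e ρ := by
    intro ρ
    apply ciSup_le
    intro δ
    exact hpoint ρ δ δ.2
  by_cases hfint : Integrable f μ
  · have hgint : Integrable (fun ρ => 1 - c * e ρ) μ :=
      (integrable_const (1 : ℝ)).sub (heint.const_mul c)
    calc ∫ ρ, f ρ ∂μ ≤ ∫ ρ, (1 - c * e ρ) ∂μ := integral_mono hfint hgint hfg
      _ = 1 - c * ∫ ρ, e ρ ∂μ := by
          rw [integral_sub (integrable_const 1) (heint.const_mul c), MeasureTheory.integral_const_mul]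
          simp
  · rw [integral_undef hfint]
    nlinarith
end
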